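/- arXiv:0801.2430 — 3 statements merged into one kernel-verified Lean document; each statement's English description precedes it below -/
import Mathlib

section
/- Let k be a field of characteristic not 2 or 3 and A, B elements of k. The hypersurface w^2 = z^3 + A x^6 + B y^6 in the weighted projective space P_k(1,1,2,3) is smooth if and only if A and B are both nonzero. -/
open MvPolynomial

/-- Let `k` be a field of characteristic not 2 or 3 and `A, B ∈ k`. The
hypersurface `w² = z³ + Ax⁶ + By⁶` in `P_k(1,1,2,3)` is smooth if and only if `A` and `B`
are both nonzero. Smoothness is expressed via the Jacobian criterion: the sextic
`w² - z³ - Ax⁶ - By⁶` and its partial derivatives have no common nontrivial zero over the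
algebraic closure of `k`. -/
theorem stmt_0 (k : Type*) [Field k] (hch2 : ringChar k ≠ 2) (hch3 : ringChar k ≠ 3)
    (A B : k) :
    (∀ P : Fin 4 → AlgebraicClosure k,
        eval P (X 3 ^ 2 - X 2 ^ 3
          - C (algebraMap k (AlgebraicClosure k) A) * X 0 ^ 6
          - C (algebraMap k (AlgebraicClosure k) B) * X 1 ^ 6) = 0 →
        (∀ i : Fin 4, eval P (pderiv i (X 3 ^ 2 - X 2 ^ 3
          - C (algebraMap k (AlgebraicClosure k) A) * X 0 ^ 6
          - C (algebraMap k (AlgebraicClosure k) B) * X 1 ^ 6)) = 0) →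
        P = 0)
      ↔ (A ≠ 0 ∧ B ≠ 0) := by
  set K := AlgebraicClosure k
  have hinj : Function.Injective (algebraMap k K) := (algebraMap k K).injective
  have h2k : (2 : k) ≠ 0 := by
    intro h
    have hd := (ringChar.spec k 2).mp (by exact_mod_cast h)
    exact hch2 (((Nat.dvd_prime Nat.prime_two).mp hd).resolve_left CharP.ringChar_ne_one)
  have h3k : (3 : k) ≠ 0 := by
    intro h
    have hd := (ringChar.spec k 3).mp (by exact_mod_cast h)
    exact hch3 (((Nat.dvd_prime Nat.prime_three).mp hd).resolve_left CharP.ringChar_ne_one)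
  have h2 : (2 : K) ≠ 0 := by
    intro h; apply h2k; apply hinj; rw [map_ofNat, map_zero]; exact_mod_cast h
  have h3 : (3 : K) ≠ 0 := by
    intro h; apply h3k; apply hinj; rw [map_ofNat, map_zero]; exact_mod_cast h
  have h6 : (6 : K) ≠ 0 := by
    intro h
    have : (2 : K) * 3 = 0 := by rw [show (2:K)*3 = 6 by norm_num, h]
    rcases mul_eq_zero.mp this with h' | h' <;> [exact h2 h'; exact h3 h']
  constructor
  · intro hsm
    constructor
    · intro hA
      have hP := hsm (fun i => if i = 0 then 1 else 0)
        (by simp [hA]) (by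
          intro i
          fin_cases i <;> simp [pderiv_X, Pi.single_apply, hA])
      have := congrFun hP 0
      simp at this
    · intro hB
      have hP := hsm (fun i => if i = 1 then 1 else 0)
        (by simp [hB]) (by
          intro i
          fin_cases i <;> simp [pderiv_X, Pi.single_apply, hB])
      have := congrFun hP 1
      simp at this
  · rintro ⟨hA, hB⟩ P hF hD
    have hAK : algebraMap k K A ≠ 0 := fun h => hA (hinj (by rw [h, map_zero]))
    have hBK : algebraMap k K B ≠ 0 := fun h => hB (hinj (by rw [h, map_zero]))
    have e0 := hD 0
    have e1 := hD 1
    have e2 := hD 2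
    have e3 := hD 3
    simp [pderiv_X, Pi.single_apply] at e0 e1 e2 e3
    funext i
    fin_cases i
    · exact (e0.resolve_left hA).resolve_left h6
    · exact (e1.resolve_left hB).resolve_left h6
    · exact e2.resolve_left h3
    · exact e3.resolve_left h2
end

section
/- Let k be an algebraically closed field, and let X be a smooth sextic hypersurface V(f) in P_k(1,1,2,3) with char k ≠ 2 and f = w^2 - b(x,y,z). Let Γ = V(z - Q(x,y), w - C(x,y)) and Γ' = V(z - Q(x,y), w + C(x,y)), where Q and C are binary forms of degrees 2 and 3. If Γ is a divisor on X, then Γ' is also a divisor on X and the intersection number (Γ, Γ')_X equals 3. -/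
/-!
Substituting `z = Q, w = ±C` into `w² - b` gives `C² - b(x, y, Q)` in both cases, so `Γ ⊂ X`
forces `Γ' ⊂ X`. The ideal `(z - Q, w, C)` is the preimage of `(C)` under
`(x, y, z, w) ↦ (x, y, Q, 0)`, which maps the forms of weighted degree `d` onto the binary
forms of degree `d`; so if `C ≠ 0` its degree-`d` piece has codimension
`dim k[x,y]_d - dim k[x,y]_{d-3} = (d + 1) - (d - 2) = 3`.
Smoothness rules out `C = 0`: then `b(x, y, Q) = 0`, so `b = (z - Q) g`, and `w² - (z - Q) g` is
singular wherever `w = 0`, `z = Q` and `g = 0`; such a point exists because `g(x, y, Q)` is a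
binary quartic over an algebraically closed field.
-/

open MvPolynomial

noncomputable section

/-- The dimension of the degree-`d` graded piece (for the weights `1,1,2,3` on `x,y,z,w`)
of the quotient of `k[x,y,z,w]` by the homogeneous ideal `I`; for `d` large this is the
degree of the closed subscheme of `P_k(1,1,2,3)` cut out by `I`. -/
def pieceRank (k : Type*) [Field k] (I : Ideal (MvPolynomial (Fin 4) k)) (d : ℕ) : ℕ :=
  Module.finrank k
    (↥(weightedHomogeneousSubmodule k ![1, 1, 2, 3] d) ⧸
      (Submodule.comap (weightedHomogeneousSubmodule k ![1, 1, 2, 3] d).subtype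
        (I.restrictScalars k)))

theorem Submodule.finrank_quotient_comap_subtype_eq {R V W : Type*} [Ring R]
    [AddCommGroup V] [Module R V] [AddCommGroup W] [Module R W] (f : V →ₗ[R] W)
    {A I : Submodule R V} {B J : Submodule R W} (hmaps : ∀ v ∈ A, f v ∈ B)
    (hsurj : ∀ w ∈ B, ∃ v ∈ A, f v = w) (hmem : ∀ v ∈ A, v ∈ I ↔ f v ∈ J) :
    Module.finrank R (A ⧸ I.comap A.subtype) = Module.finrank R (B ⧸ J.comap B.subtype) := by
  let L := (J.comap B.subtype).mkQ ∘ₗ f.restrict hmaps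
  have hL : Function.Surjective L := by
    rintro ⟨⟨w, hw⟩⟩
    obtain ⟨v, hv, rfl⟩ := hsurj w hw
    exact ⟨⟨v, hv⟩, rfl⟩
  have hker : LinearMap.ker L = I.comap A.subtype := by
    ext ⟨v, hv⟩
    simp [L, hmem v hv]
  exact ((Submodule.quotEquivOfEq _ _ hker.symm).trans (L.quotKerEquivOfSurjective hL)).finrank_eq

namespace MvPolynomial

variable {R σ τ M : Type*} [CommRing R]

theorem sub_aeval_mem {G : σ → MvPolynomial σ R} {J : Ideal (MvPolynomial σ R)}
    (hG : ∀ i, X i - G i ∈ J) (p : MvPolynomial σ R) : p - aeval G p ∈ J := by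
  have h : Ideal.Quotient.mkₐ R J = (Ideal.Quotient.mkₐ R J).comp (aeval G) :=
    algHom_ext fun i => by simpa [Ideal.Quotient.eq] using hG i
  rw [← Ideal.Quotient.eq, ← Ideal.Quotient.mkₐ_eq_mk R]
  exact DFunLike.congr_fun h p

theorem IsWeightedHomogeneous.aeval {w : σ → ℕ} {w' : τ → ℕ} {φ : MvPolynomial σ R} {m : ℕ}
    (hφ : φ.IsWeightedHomogeneous w m) (g : σ → MvPolynomial τ R)
    (hg : ∀ i, (g i).IsWeightedHomogeneous w' (w i)) :
    (aeval g φ).IsWeightedHomogeneous w' m := by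
  rw [aeval_def, eval₂_eq]
  refine IsWeightedHomogeneous.sum _ _ _ fun d hd => ?_
  rw [← zero_add m]
  refine (isWeightedHomogeneous_C _ _).mul ?_
  convert IsWeightedHomogeneous.prod _ _ (fun i => d i • w i) fun i _ => (hg i).pow (d i)
  rw [← hφ (mem_support_iff.mp hd), Finsupp.weight_apply, Finsupp.sum]

theorem IsWeightedHomogeneous.rename {w : σ → ℕ} {w' : τ → ℕ} {φ : MvPolynomial σ R} {m : ℕ}
    (hφ : φ.IsWeightedHomogeneous w m) (f : σ → τ) (hw : ∀ i, w' (f i) = w i) :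
    (rename f φ).IsWeightedHomogeneous w' m := by
  rw [rename_eq_aeval]
  exact hφ.aeval _ fun i => hw i ▸ isWeightedHomogeneous_X R w' (f i)

theorem weightedHomogeneousComponent_mul_add_of_left [AddCancelCommMonoid M] {w : σ → M}
    {a : MvPolynomial σ R} {m : M} (ha : a.IsWeightedHomogeneous w m) (q : MvPolynomial σ R)
    (e : M) :
    weightedHomogeneousComponent w (m + e) (a * q) = a * weightedHomogeneousComponent w e q := by
  classical
  let := weightedGradedAlgebra R w
  simp_rw [← weightedDecomposition.decompose'_apply]
  exact DirectSum.coe_decompose_mul_add_of_left_mem (𝒜 := weightedHomogeneousSubmodule R w) ha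

theorem eval_sq_sub_mul_eq_zero {a u h : MvPolynomial σ R} {P : σ → R}
    (ha : eval P a = 0) (hu : eval P u = 0) (hh : eval P h = 0) :
    eval P (a ^ 2 - u * h) = 0 := by
  simp [ha, hu, hh]

theorem eval_pderiv_sq_sub_mul_eq_zero {a u h : MvPolynomial σ R} {P : σ → R}
    (ha : eval P a = 0) (hu : eval P u = 0) (hh : eval P h = 0) (i : σ) :
    eval P (pderiv i (a ^ 2 - u * h)) = 0 := by
  simp [ha, hu, hh]

theorem finrank_homogeneousSubmodule [Fintype σ] [Nontrivial R] (n : ℕ) :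
    Module.finrank R (homogeneousSubmodule σ R n) = (Fintype.card σ).multichoose n := by
  classical
  let B := (basisRestrictSupport R {d : σ →₀ ℕ | d.degree = n}).map
    (LinearEquiv.ofEq _ _ (homogeneousSubmodule_eq_finsupp_supported σ R n)).symm
  have hsupp : {d : σ →₀ ℕ | d.degree = n} =
      ((Finset.univ.finsuppAntidiag n : Finset (σ →₀ ℕ)) : Set (σ →₀ ℕ)) := by
    ext d
    simp [Finsupp.degree_eq_sum]
  rw [Module.finrank_eq_nat_card_basis B, hsupp, Nat.card_coe_set_eq, Set.ncard_coe_finset,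
    Finset.card_finsuppAntidiag_nat_eq_multichoose, Finset.card_univ]

theorem IsHomogeneous.exists_ne_zero_eval_eq_zero {K : Type*} [Field K] [IsAlgClosed K]
    {φ : MvPolynomial (Fin 2) K} {n : ℕ} (hφ : φ.IsHomogeneous n) (hn : n ≠ 0) :
    ∃ p : Fin 2 → K, p ≠ 0 ∧ eval p φ = 0 := by
  set u : Polynomial K := MvPolynomial.aeval ![Polynomial.X, 1] φ
  have hu (t : K) : u.eval t = eval ![t, 1] φ := by
    have h : (fun i => Polynomial.aeval t (![Polynomial.X, 1] i : Polynomial K)) = ![t, 1] := by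
      funext i; fin_cases i <;> simp
    rw [← Polynomial.coe_aeval_eq_eval, comp_aeval_apply, h]
    rfl
  -- If `φ(t, 1)` has no root it is a constant `c`, and then `φ = c y^n` vanishes at `(1, 0)`.
  by_cases hroot : ∃ t, u.IsRoot t
  · obtain ⟨t, ht⟩ := hroot
    exact ⟨![t, 1], fun h => by simpa using congrFun h 1, (hu t).symm.trans ht⟩
  · have hdeg : u.degree = 0 := by
      by_contra h
      exact hroot (IsAlgClosed.exists_root u h)
    have hφ_eq : φ = .C (u.coeff 0) * X 1 ^ n :=
      (Polynomial.homogenize_eq_of_isHomogeneous hφ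
        (Polynomial.eq_C_of_degree_eq_zero hdeg)).symm.trans (Polynomial.homogenize_C _ _)
    exact ⟨![1, 0], fun h => by simpa using congrFun h 0, by simp [hφ_eq, hn]⟩

theorem finrank_comap_homogeneousSubmodule_span_singleton {K : Type*} [Field K] [Fintype σ]
    {C : MvPolynomial σ K} {e d : ℕ} (hC : C.IsHomogeneous e) (hC0 : C ≠ 0) (hed : e ≤ d) :
    Module.finrank K (((Ideal.span {C}).restrictScalars K).comap
      (homogeneousSubmodule σ K d).subtype) =
      Module.finrank K (homogeneousSubmodule σ K (d - e)) := by
  have hmaps : ∀ q ∈ homogeneousSubmodule σ K (d - e),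
      LinearMap.mulLeft K C q ∈ homogeneousSubmodule σ K d := fun q hq => by
    simpa [Nat.add_sub_cancel' hed] using hC.mul hq
  let mulC := (LinearMap.mulLeft K C).restrict hmaps
  have hinj : Function.Injective mulC := fun q q' h =>
    Subtype.ext (mul_left_cancel₀ hC0 (congrArg Subtype.val h))
  have hrange : ((Ideal.span {C}).restrictScalars K).comap (homogeneousSubmodule σ K d).subtype
      = LinearMap.range mulC := by
    ext ⟨p, hp⟩
    simp only [Submodule.mem_comap, Submodule.subtype_apply, Submodule.restrictScalars_mem,
      Ideal.mem_span_singleton', LinearMap.mem_range]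
    constructor
    · rintro ⟨q, rfl⟩
      refine ⟨⟨weightedHomogeneousComponent 1 (d - e) q,
        weightedHomogeneousComponent_mem _ _ _⟩, Subtype.ext ?_⟩
      have := weightedHomogeneousComponent_mul_add_of_left hC q (d - e)
      rw [Nat.add_sub_cancel' hed, mul_comm C q,
        IsWeightedHomogeneous.weightedHomogeneousComponent_same hp] at this
      exact this.symm
    · rintro ⟨⟨q, hq⟩, h⟩
      exact ⟨q, by simpa [mul_comm, mulC] using congrArg Subtype.val h⟩
  rw [hrange, LinearMap.finrank_range_of_inj hinj]

theorem finrank_homogeneousSubmodule_fin_two_quotient_span_singleton {K : Type*} [Field K]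
    {C : MvPolynomial (Fin 2) K} {e d : ℕ} (hC : C.IsHomogeneous e) (hC0 : C ≠ 0) (hed : e ≤ d) :
    Module.finrank K (homogeneousSubmodule (Fin 2) K d ⧸
      ((Ideal.span {C}).restrictScalars K).comap (homogeneousSubmodule (Fin 2) K d).subtype) =
      e := by
  have : Module.Finite K (homogeneousSubmodule (Fin 2) K d) :=
    Module.Finite.iff_fg.mpr (homogeneousSubmodule_fg _ _ d)
  have h := Submodule.finrank_quotient_add_finrank
    (((Ideal.span {C}).restrictScalars K).comap (homogeneousSubmodule (Fin 2) K d).subtype)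
  rw [finrank_comap_homogeneousSubmodule_span_singleton hC hC0 hed, finrank_homogeneousSubmodule,
    finrank_homogeneousSubmodule, Fintype.card_fin, Nat.multichoose_two,
    Nat.multichoose_two] at h
  omega

end MvPolynomial

section

variable {R k : Type*} [CommRing R] [Field k]

theorem aeval_X_sq_sub_rename (b : MvPolynomial (Fin 3) R) (Q E : MvPolynomial (Fin 2) R) :
    aeval ![X 0, X 1, Q, E] (X 3 ^ 2 - rename ![0, 1, 2] b : MvPolynomial (Fin 4) R) =
      E ^ 2 - aeval ![X 0, X 1, Q] b := by
  have h : (![X 0, X 1, Q, E] ∘ ![0, 1, 2] : Fin 3 → MvPolynomial (Fin 2) R) = ![X 0, X 1, Q] := by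
    funext i; fin_cases i <;> rfl
  rw [map_sub, map_pow, aeval_X, aeval_rename, h]
  rfl

theorem aeval_rename_zero_one (z w r : MvPolynomial (Fin 2) R) :
    aeval ![X 0, X 1, z, w] (rename ![0, 1] r : MvPolynomial (Fin 4) R) = r := by
  have h : (![X 0, X 1, z, w] ∘ ![0, 1] : Fin 2 → MvPolynomial (Fin 2) R) = X := by
    funext i; fin_cases i <;> rfl
  rw [aeval_rename, h, aeval_X_left_apply]

theorem exists_eq_X_sub_mul_of_aeval_eq_zero {b : MvPolynomial (Fin 3) R}
    {Q : MvPolynomial (Fin 2) R} {e : ℕ} (hQ : Q.IsHomogeneous 2)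
    (hb : b.IsWeightedHomogeneous ![1, 1, 2] (2 + e)) (h0 : aeval ![X 0, X 1, Q] b = 0) :
    ∃ g, g.IsWeightedHomogeneous ![1, 1, 2] e ∧ b = (X 2 - rename ![0, 1] Q) * g := by
  set u : MvPolynomial (Fin 3) R := X 2 - rename ![0, 1] Q
  have hu : u.IsWeightedHomogeneous ![1, 1, 2] 2 :=
    (isWeightedHomogeneous_X R _ 2).sub (hQ.rename _ fun i => by fin_cases i <;> rfl)
  have hmem : b ∈ Ideal.span {u} := by
    have h := sub_aeval_mem (G := ![X 0, X 1, rename ![0, 1] Q]) (J := Ideal.span {u})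
      (fun i => by fin_cases i <;> simp [u]) b
    have hcomp : (rename ![0, 1] (aeval ![X 0, X 1, Q] b) : MvPolynomial (Fin 3) R) =
        aeval ![X 0, X 1, rename ![0, 1] Q] b := by
      rw [comp_aeval_apply]
      congr 2
      funext i; fin_cases i <;> simp
    rwa [← hcomp, h0, map_zero, sub_zero] at h
  obtain ⟨g, rfl⟩ := Ideal.mem_span_singleton'.mp hmem
  refine ⟨weightedHomogeneousComponent ![1, 1, 2] e g,
    weightedHomogeneousComponent_isWeightedHomogeneous _ _, ?_⟩
  rw [← weightedHomogeneousComponent_mul_add_of_left hu, mul_comm u g,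
    hb.weightedHomogeneousComponent_same]

theorem aeval_ne_zero_of_smooth [IsAlgClosed k] {b : MvPolynomial (Fin 3) k}
    (hb : b.IsWeightedHomogeneous ![1, 1, 2] 6)
    (hsmooth : ∀ P : Fin 4 → k,
        eval P (X 3 ^ 2 - rename ![0, 1, 2] b) = 0 →
        (∀ i : Fin 4, eval P (pderiv i (X 3 ^ 2 - rename ![0, 1, 2] b)) = 0) →
        P = 0)
    {Q : MvPolynomial (Fin 2) k} (hQ : Q.IsHomogeneous 2) :
    aeval ![X 0, X 1, Q] b ≠ 0 := by
  intro h0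
  obtain ⟨g, hg, rfl⟩ := exists_eq_X_sub_mul_of_aeval_eq_zero (e := 4) hQ hb h0
  have hgQ : (aeval ![X 0, X 1, Q] g).IsHomogeneous 4 :=
    hg.aeval _ fun i => by
      fin_cases i
      exacts [isHomogeneous_X _ _, isHomogeneous_X _ _, hQ]
  obtain ⟨p, hp0, hp⟩ := hgQ.exists_ne_zero_eval_eq_zero (by norm_num)
  set P : Fin 4 → k := ![p 0, p 1, eval p Q, 0]
  have hu : eval P (X 2 - rename ![0, 1] Q) = 0 := by
    have hP : P ∘ ![0, 1] = p := by funext i; fin_cases i <;> rfl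
    rw [map_sub, eval_X, eval_rename, hP]
    exact sub_self _
  have hgP : eval P (rename ![0, 1, 2] g) = 0 := by
    have hP : P ∘ ![0, 1, 2] = fun i => eval p (![X 0, X 1, Q] i) := by
      funext i; fin_cases i <;> simp [P]
    rw [eval_rename, hP, ← hp, aeval_eq_bind₁]
    exact (eval₂Hom_bind₁ _ _ _ _).symm
  have hf : (X 3 ^ 2 - rename ![0, 1, 2] ((X 2 - rename ![0, 1] Q) * g) :
      MvPolynomial (Fin 4) k) = X 3 ^ 2 - (X 2 - rename ![0, 1] Q) * rename ![0, 1, 2] g := by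
    have h : (![0, 1, 2] ∘ ![0, 1] : Fin 2 → Fin 4) = ![0, 1] := by
      funext i; fin_cases i <;> rfl
    rw [map_mul, map_sub, rename_X, rename_rename, h]
    rfl
  have hP3 : eval P (X 3) = 0 := eval_X _
  have hP0 := hsmooth P (hf ▸ eval_sq_sub_mul_eq_zero hP3 hu hgP)
    (hf ▸ eval_pderiv_sq_sub_mul_eq_zero hP3 hu hgP)
  exact hp0 (funext fun i => by fin_cases i; exacts [congrFun hP0 0, congrFun hP0 1])

theorem mem_span_iff_aeval_mem (Q C : MvPolynomial (Fin 2) R) (p : MvPolynomial (Fin 4) R) :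
    p ∈ Ideal.span {X 2 - rename ![0, 1] Q, X 3, rename ![0, 1] C} ↔
      aeval ![X 0, X 1, Q, 0] p ∈ Ideal.span {C} := by
  set I : Ideal (MvPolynomial (Fin 4) R) :=
    Ideal.span {X 2 - rename ![0, 1] Q, X 3, rename ![0, 1] C}
  constructor
  · intro hp
    refine (Ideal.span_le (I := Ideal.comap (aeval ![X 0, X 1, Q, 0]) (Ideal.span {C}))).mpr
      ?_ hp
    simp [-aeval_eq_bind₁, Set.insert_subset_iff, aeval_rename_zero_one]
  · intro hp
    obtain ⟨r, hr⟩ := Ideal.mem_span_singleton'.mp hp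
    have h := sub_aeval_mem (G := ![X 0, X 1, rename ![0, 1] Q, 0]) (J := I)
      (fun i => by fin_cases i <;> simp [I] <;> exact Ideal.subset_span (by simp)) p
    have hcomp : (rename ![0, 1] (aeval ![X 0, X 1, Q, 0] p) : MvPolynomial (Fin 4) R) =
        aeval ![X 0, X 1, rename ![0, 1] Q, 0] p := by
      rw [comp_aeval_apply]
      congr 2
      funext i; fin_cases i <;> simp
    rw [← hcomp, ← hr, map_mul] at h
    have hC : rename ![0, 1] C ∈ I := Ideal.subset_span (by simp)
    simpa using I.add_mem h (I.mul_mem_left (rename ![0, 1] r) hC)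

theorem pieceRank_span_eq_three {Q C : MvPolynomial (Fin 2) k} (hQ : Q.IsHomogeneous 2)
    (hC : C.IsHomogeneous 3) (hC0 : C ≠ 0) {d : ℕ} (hd : 3 ≤ d) :
    pieceRank k (Ideal.span {X 2 - rename ![0, 1] Q, X 3, rename ![0, 1] C}) d = 3 := by
  rw [pieceRank, Submodule.finrank_quotient_comap_subtype_eq (aeval ![X 0, X 1, Q, 0]).toLinearMap
    (B := homogeneousSubmodule (Fin 2) k d) (J := (Ideal.span {C}).restrictScalars k)
    (fun p hp => IsWeightedHomogeneous.aeval hp _ fun i => by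
      fin_cases i
      exacts [isHomogeneous_X _ _, isHomogeneous_X _ _, hQ, isWeightedHomogeneous_zero _ _ _])
    (fun r hr => ⟨rename ![0, 1] r, hr.rename _ fun i => by fin_cases i <;> rfl,
      aeval_rename_zero_one Q 0 r⟩)
    (fun p _ => mem_span_iff_aeval_mem Q C p)]
  exact finrank_homogeneousSubmodule_fin_two_quotient_span_singleton hC hC0 hd

end

theorem stmt_1_general (k : Type*) [Field k] [IsAlgClosed k]
    (b : MvPolynomial (Fin 3) k)
    (hb : MvPolynomial.IsWeightedHomogeneous ![1, 1, 2] b 6)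
    (hsmooth : ∀ P : Fin 4 → k,
        eval P (X 3 ^ 2 - rename ![0, 1, 2] b) = 0 →
        (∀ i : Fin 4, eval P (pderiv i (X 3 ^ 2 - rename ![0, 1, 2] b)) = 0) →
        P = 0)
    (Q C : MvPolynomial (Fin 2) k)
    (hQ : Q.IsHomogeneous 2) (hC : C.IsHomogeneous 3)
    (hΓ : aeval ![(X 0 : MvPolynomial (Fin 2) k), X 1, Q, C]
        (X 3 ^ 2 - rename ![0, 1, 2] b : MvPolynomial (Fin 4) k) = 0) :
    aeval ![(X 0 : MvPolynomial (Fin 2) k), X 1, Q, -C]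
        (X 3 ^ 2 - rename ![0, 1, 2] b : MvPolynomial (Fin 4) k) = 0 ∧
    ∀ d : ℕ, 3 ≤ d →
      pieceRank k (Ideal.span {X 2 - rename ![0, 1] Q, X 3, rename ![0, 1] C}) d = 3 := by
  rw [aeval_X_sq_sub_rename, sub_eq_zero] at hΓ
  refine ⟨by rw [aeval_X_sq_sub_rename, ← hΓ, neg_sq, sub_self],
    fun d hd => pieceRank_span_eq_three hQ hC ?_ hd⟩
  rintro rfl
  exact aeval_ne_zero_of_smooth hb hsmooth hQ (by rw [← hΓ]; ring)

/-- Let `k` be algebraically closed of characteristic `≠ 2` and let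
`X = V(w² - b(x,y,z))` be a smooth sextic in `P_k(1,1,2,3)` (a del Pezzo surface of
degree 1).  Let `Γ = V(z - Q, w - C)` and `Γ' = V(z - Q, w + C)` with `Q, C` binary forms
of degrees 2, 3.  If `Γ` is a divisor on `X`, then so is `Γ'`, and the intersection number
`(Γ,Γ')_X` — the degree of the intersection scheme, whose ideal is `(z - Q, w, C)` —
equals 3. -/
theorem stmt_1 (k : Type*) [Field k] [IsAlgClosed k] (hchar : ringChar k ≠ 2)
    (b : MvPolynomial (Fin 3) k)
    (hb : MvPolynomial.IsWeightedHomogeneous ![1, 1, 2] b 6)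
    (hsmooth : ∀ P : Fin 4 → k,
        eval P (X 3 ^ 2 - rename ![0, 1, 2] b) = 0 →
        (∀ i : Fin 4, eval P (pderiv i (X 3 ^ 2 - rename ![0, 1, 2] b)) = 0) →
        P = 0)
    (Q C : MvPolynomial (Fin 2) k)
    (hQ : Q.IsHomogeneous 2) (hC : C.IsHomogeneous 3)
    (hΓ : aeval ![(X 0 : MvPolynomial (Fin 2) k), X 1, Q, C]
        (X 3 ^ 2 - rename ![0, 1, 2] b : MvPolynomial (Fin 4) k) = 0) :
    aeval ![(X 0 : MvPolynomial (Fin 2) k), X 1, Q, -C]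
        (X 3 ^ 2 - rename ![0, 1, 2] b : MvPolynomial (Fin 4) k) = 0 ∧
    ∀ d : ℕ, 3 ≤ d →
      pieceRank k (Ideal.span {X 2 - rename ![0, 1] Q, X 3, rename ![0, 1] C}) d = 3 :=
  stmt_1_general k b hb hsmooth Q C hQ hC hΓ
end
end

section
/- Let K = k(ζ, ∛2, α, β) where k is a field of characteristic ≠ 2,3, ζ is a primitive sixth root of unity, α⁶ = A, β⁶ = B with A, B ∈ k*. If L ⊆ K is a subfield of K containing k and containing the four elements ∛2·αβ, ∛2·ζαβ, ∛2·(ζ+1)αβ², and ∛2·(ζ+1)α²β, then L = K. -/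
/-- Let `K = k(ζ, ∛2, α, β)` with `ζ` a primitive sixth root of unity,
`α⁶ = A`, `β⁶ = B`, `A, B ∈ k*` and `char k ≠ 2, 3`. Any subfield `L` of `K` containing `k`
together with the four elements `∛2·αβ`, `∛2·ζαβ`, `∛2·(ζ+1)αβ²`, `∛2·(ζ+1)α²β`
equals `K`. -/
theorem stmt_7 (k Ω : Type*) [Field k] [Field Ω] [Algebra k Ω]
    (hch2 : ringChar k ≠ 2) (hch3 : ringChar k ≠ 3)
    (A B : k) (hA : A ≠ 0) (hB : B ≠ 0)
    (ζ s α β : Ω) (hζ : IsPrimitiveRoot ζ 6) (hs : s ^ 3 = 2)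
    (hα : α ^ 6 = algebraMap k Ω A) (hβ : β ^ 6 = algebraMap k Ω B)
    (L : IntermediateField k Ω)
    (hLK : L ≤ IntermediateField.adjoin k {ζ, s, α, β})
    (h1 : s * α * β ∈ L) (h2 : s * ζ * α * β ∈ L)
    (h3 : s * (ζ + 1) * α * β ^ 2 ∈ L) (h4 : s * (ζ + 1) * α ^ 2 * β ∈ L) :
    L = IntermediateField.adjoin k {ζ, s, α, β} := by
  have hinj := (algebraMap k Ω).injective
  have h2k : (2 : k) ≠ 0 := Ring.two_ne_zero hch2
  have h2Ω : (2 : Ω) ≠ 0 := by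
    intro h
    apply h2k
    apply hinj
    rw [map_ofNat, map_zero, h]
  have hs0 : s ≠ 0 := by
    intro h
    apply h2Ω
    rw [← hs, h, zero_pow] <;> norm_num
  have hα0 : α ≠ 0 := by
    intro h
    have : algebraMap k Ω A = 0 := by rw [← hα, h, zero_pow] <;> norm_num
    exact hA (hinj (by rw [this, map_zero]))
  have hβ0 : β ≠ 0 := by
    intro h
    have : algebraMap k Ω B = 0 := by rw [← hβ, h, zero_pow] <;> norm_num
    exact hB (hinj (by rw [this, map_zero]))
  have hζ1 : ζ + 1 ≠ 0 := by
    intro h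
    have hζeq : ζ = -1 := by linear_combination h
    have : (6 : ℕ) ∣ 2 := hζ.dvd_of_pow_eq_one 2 (by rw [hζeq]; ring)
    omega
  have hζL : ζ ∈ L := by
    have hd : (s * ζ * α * β) / (s * α * β) ∈ L := L.div_mem h2 h1
    have : (s * ζ * α * β) / (s * α * β) = ζ := by
      field_simp
    rwa [this] at hd
  have hζ1L : ζ + 1 ∈ L := L.add_mem hζL L.one_mem
  have hβL : β ∈ L := by
    have hd : (s * (ζ + 1) * α * β ^ 2) / ((ζ + 1) * (s * α * β)) ∈ L :=
      L.div_mem h3 (L.mul_mem hζ1L h1)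
    have : (s * (ζ + 1) * α * β ^ 2) / ((ζ + 1) * (s * α * β)) = β := by
      field_simp
    rwa [this] at hd
  have hαL : α ∈ L := by
    have hd : (s * (ζ + 1) * α ^ 2 * β) / ((ζ + 1) * (s * α * β)) ∈ L :=
      L.div_mem h4 (L.mul_mem hζ1L h1)
    have : (s * (ζ + 1) * α ^ 2 * β) / ((ζ + 1) * (s * α * β)) = α := by
      field_simp
    rwa [this] at hd
  have hsL : s ∈ L := by
    have hd : (s * α * β) / (α * β) ∈ L := L.div_mem h1 (L.mul_mem hαL hβL)
    have : (s * α * β) / (α * β) = s := by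
      field_simp
    rwa [this] at hd
  refine le_antisymm hLK (IntermediateField.adjoin_le_iff.2 ?_)
  intro x hx
  simp only [Set.mem_insert_iff, Set.mem_singleton_iff] at hx
  rcases hx with rfl | rfl | rfl | rfl
  · exact hζL
  · exact hsL
  · exact hαL
  · exact hβL
end
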